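/- arXiv:2401.06109 — 4 statements merged into one kernel-verified Lean document; each statement's English description precedes it below -/
import Mathlib

section
/- For any simplicial complex on n vertices and any k ≥ 1, the k-th Betti number over ℤ/2 satisfies β_k ≤ binom(n-1, k+1). -/
open Finset

variable {V : Type*} [Fintype V] [DecidableEq V]

/-- The mod-2 boundary operator on chains (functions on finsets of vertices),
with the convention that the boundary of a 0-chain is zero (δ₀ = 0). -/
def bdry (V : Type*) [Fintype V] [DecidableEq V] :
    (Finset V → ZMod 2) →ₗ[ZMod 2] (Finset V → ZMod 2) where
  toFun c := fun T => if T = ∅ then 0 else ∑ v ∈ Finset.univ \ T, c (insert v T)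
  map_add' c d := by
    funext T
    by_cases h : T = ∅ <;> simp [h, Finset.sum_add_distrib]
  map_smul' a c := by
    funext T
    by_cases h : T = ∅ <;> simp [h, Finset.mul_sum, mul_sub]

/-- The space of `k`-chains of a complex `Δ`: chains supported on the `k`-faces. -/
def chainSpace (Δ : Finset (Finset V)) (k : ℕ) :
    Submodule (ZMod 2) (Finset V → ZMod 2) where
  carrier := {c | ∀ S, c S ≠ 0 → S ∈ Δ ∧ S.card = k + 1}
  add_mem' := by
    intro c d hc hd S hS
    by_cases h : c S = 0
    · exact hd S (fun h' => hS (by simp [h, h']))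
    · exact hc S h
  zero_mem' := by intro S hS; simp at hS
  smul_mem' := by
    intro a c hc S hS
    exact hc S fun h => hS (by simp [h])

/-- `rk Δ k` is the rank of the `k`-th boundary map of `Δ` over ℤ/2,
i.e. the rank of the `k`-simplicial matroid. -/
noncomputable def rk (Δ : Finset (Finset V)) (k : ℕ) : ℕ :=
  Module.finrank (ZMod 2) ((chainSpace Δ k).map (bdry V))

/-- `betti Δ k` is the `k`-th Betti number of `Δ` over ℤ/2:
dim ker δ_k − dim im δ_{k+1}. -/
noncomputable def betti (Δ : Finset (Finset V)) (k : ℕ) : ℕ :=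
  Module.finrank (ZMod 2)
      (chainSpace Δ k ⊓ LinearMap.ker (bdry V) : Submodule (ZMod 2) (Finset V → ZMod 2))
    - rk Δ (k + 1)

/-- `dfaces Δ k` is the number of `k`-faces of `Δ`. -/
def dfaces (Δ : Finset (Finset V)) (k : ℕ) : ℕ :=
  (Δ.filter fun S => S.card = k + 1).card

/-- A simplicial complex: a downward-closed family of finsets. -/
def IsComplex (Δ : Finset (Finset V)) : Prop :=
  ∀ S ∈ Δ, ∀ T ⊆ S, T ∈ Δ

/-- for any simplicial complex on `n` vertices and `k ≥ 1`,
`β_k ≤ binom (n-1) (k+1)`. -/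
theorem stmt_5 (Δ : Finset (Finset V)) (hΔ : IsComplex Δ) (n k : ℕ)
    (hn : Fintype.card V = n) (hk : 1 ≤ k) (hkn : k + 1 ≤ n) :
    betti Δ k ≤ (n - 1).choose (k + 1) := by
  refine le_trans (Nat.sub_le _ _) ?_
  have hV : 0 < Fintype.card V := by omega
  obtain ⟨v0⟩ := Fintype.card_pos_iff.mp hV
  set F : Finset (Finset V) := (Finset.univ.erase v0).powersetCard (k + 1) with hF
  let φ : (Finset V → ZMod 2) →ₗ[ZMod 2] (↥F → ZMod 2) :=
    { toFun := fun c S => c S.1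
      map_add' := by intros; rfl
      map_smul' := by intros; rfl }
  set Z : Submodule (ZMod 2) (Finset V → ZMod 2) :=
    chainSpace Δ k ⊓ LinearMap.ker (bdry V) with hZ
  let ψ : Z →ₗ[ZMod 2] (↥F → ZMod 2) := φ.comp Z.subtype
  have hinj : Function.Injective ψ := by
    rw [← LinearMap.ker_eq_bot, LinearMap.ker_eq_bot']
    rintro ⟨c, hc⟩ h
    have hchain : ∀ S, c S ≠ 0 → S ∈ Δ ∧ S.card = k + 1 := hc.1
    have hker : bdry V c = 0 := hc.2
    have hzeroF : ∀ S, S ∈ F → c S = 0 := by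
      intro S hS
      have := congrFun h ⟨S, hS⟩
      simpa [ψ, φ] using this
    have key : ∀ S, c S = 0 := by
      intro S
      by_contra hcS
      obtain ⟨hSΔ, hScard⟩ := hchain S hcS
      by_cases hv0 : v0 ∈ S
      · -- use the cycle condition at T = S.erase v0
        set T := S.erase v0 with hT
        have hTcard : T.card = k := by
          rw [hT, Finset.card_erase_of_mem hv0, hScard]; omega
        have hTne : T ≠ ∅ := by
          intro h0
          rw [h0, Finset.card_empty] at hTcard
          omega
        have hbd : (bdry V c) T = 0 := by rw [hker]; rfl
        have hsum : ∑ v ∈ Finset.univ \ T, c (insert v T) = 0 := by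
          simpa [bdry, hTne] using hbd
        have hv0mem : v0 ∈ Finset.univ \ T := by
          simp [hT]
        rw [← Finset.add_sum_erase _ _ hv0mem] at hsum
        have hrest : ∀ v ∈ (Finset.univ \ T).erase v0, c (insert v T) = 0 := by
          intro v hv
          have hvne : v ≠ v0 := (Finset.mem_erase.mp hv).1
          have hvT : v ∉ T := by
            have := (Finset.mem_erase.mp hv).2
            simpa using this
          apply hzeroF
          rw [hF, Finset.mem_powersetCard]
          constructor
          · intro x hx
            rcases Finset.mem_insert.mp hx with hx | hx
            · subst hx; exact Finset.mem_erase.mpr ⟨hvne, Finset.mem_univ _⟩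
            · refine Finset.mem_erase.mpr ⟨?_, Finset.mem_univ _⟩
              intro hxv0; subst hxv0
              exact (Finset.mem_erase.mp hx).1 rfl
          · rw [Finset.card_insert_of_notMem hvT, hTcard]
        rw [Finset.sum_eq_zero hrest, add_zero] at hsum
        rw [hT, Finset.insert_erase hv0] at hsum
        exact hcS hsum
      · -- S itself is in F
        apply hcS
        apply hzeroF
        rw [hF, Finset.mem_powersetCard]
        refine ⟨fun x hx => Finset.mem_erase.mpr ⟨?_, Finset.mem_univ _⟩, hScard⟩
        intro hxv0; subst hxv0; exact hv0 hx
    exact Subtype.ext (funext key)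
  have hle := LinearMap.finrank_le_finrank_of_injective hinj
  have htarget : Module.finrank (ZMod 2) (↥F → ZMod 2) = F.card := by
    rw [Module.finrank_pi, Fintype.card_coe]
  have hFcard : F.card = (n - 1).choose (k + 1) := by
    rw [hF, Finset.card_powersetCard, Finset.card_erase_of_mem (Finset.mem_univ _),
      Finset.card_univ, hn]
  rw [htarget, hFcard] at hle
  exact hle
end

section
/- The complete (k+1)-partite graph with all parts of size m has exactly m^{k+1} cliques of size k+1, and its clique complex has k-th Betti number over ℤ/2 equal to (m−1)^{k+1}. -/
open Finset

variable {V : Type*} [Fintype V] [DecidableEq V]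

/-- The full (augmented) mod-2 boundary operator, without the `δ₀ = 0` convention:
the boundary of a 0-chain is its augmentation (so homology is *reduced*). -/
def bdryAug (V : Type*) [Fintype V] [DecidableEq V] :
    (Finset V → ZMod 2) →ₗ[ZMod 2] (Finset V → ZMod 2) where
  toFun c := fun T => ∑ v ∈ Finset.univ \ T, c (insert v T)
  map_add' c d := by
    funext T
    simp [Finset.sum_add_distrib]
  map_smul' a c := by
    funext T
    simp [Finset.mul_sum, mul_sub]

/-- The `k`-th (reduced) Betti number over ℤ/2; for `k ≥ 1` it agrees with the
usual `k`-th Betti number. -/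
noncomputable def bettiRed (Δ : Finset (Finset V)) (k : ℕ) : ℕ :=
  Module.finrank (ZMod 2)
      (chainSpace Δ k ⊓ LinearMap.ker (bdryAug V) : Submodule (ZMod 2) (Finset V → ZMod 2))
    - Module.finrank (ZMod 2) ((chainSpace Δ (k + 1)).map (bdryAug V))

/-- The clique complex of the complete `(k+1)`-partite graph with parts of size `m`:
all vertex subsets containing at most one vertex from each part. -/
def multipartiteComplex (k m : ℕ) : Finset (Finset (Fin (k + 1) × Fin m)) :=
  Finset.univ.filter fun S => ∀ a ∈ S, ∀ b ∈ S, a ≠ b → a.1 ≠ b.1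


set_option linter.unusedSectionVars false

section Aux
variable {k m : ℕ}

def gr (f : Fin (k+1) → Fin m) : Finset (Fin (k+1) × Fin m) :=
  Finset.univ.image fun i => (i, f i)

lemma mem_gr {f : Fin (k+1) → Fin m} {v : Fin (k+1) × Fin m} :
    v ∈ gr f ↔ v.2 = f v.1 := by
  simp [gr, Prod.ext_iff]; aesop

lemma gr_inj : Function.Injective (gr (k := k) (m := m)) := by
  intro f g h
  funext i
  have : (i, f i) ∈ gr g := h ▸ mem_gr.2 rfl
  simpa using mem_gr.1 this

lemma card_gr (f : Fin (k+1) → Fin m) : (gr f).card = k + 1 := by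
  rw [gr, Finset.card_image_of_injective _ (fun a b h => by simpa using congrArg Prod.fst h)]
  simp

lemma gr_mem (f : Fin (k+1) → Fin m) : gr f ∈ multipartiteComplex k m := by
  simp only [multipartiteComplex, mem_filter, mem_univ, true_and]
  intro a ha b hb hne h1
  exact hne (Prod.ext h1 (by rw [mem_gr.1 ha, mem_gr.1 hb, h1]))

lemma mpc_subset {S T : Finset (Fin (k+1) × Fin m)}
    (hS : S ∈ multipartiteComplex k m) (hTS : T ⊆ S) : T ∈ multipartiteComplex k m := by
  simp only [multipartiteComplex, mem_filter, mem_univ, true_and] at hS ⊢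
  exact fun a ha b hb => hS a (hTS ha) b (hTS hb)

lemma card_le_of_mem {S : Finset (Fin (k+1) × Fin m)}
    (hS : S ∈ multipartiteComplex k m) : S.card ≤ k + 1 := by
  simp only [multipartiteComplex, mem_filter, mem_univ, true_and] at hS
  have hinj : Set.InjOn Prod.fst (S : Set (Fin (k+1) × Fin m)) := by
    intro a ha b hb h
    by_contra hne
    exact hS a ha b hb hne h
  calc S.card = (S.image Prod.fst).card := (Finset.card_image_of_injOn hinj).symm
    _ ≤ Fintype.card (Fin (k+1)) := Finset.card_le_univ _
    _ = k + 1 := by simp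

lemma exists_gr {S : Finset (Fin (k+1) × Fin m)}
    (hS : S ∈ multipartiteComplex k m) (hc : S.card = k + 1) : ∃ f, S = gr f := by
  simp only [multipartiteComplex, mem_filter, mem_univ, true_and] at hS
  have hinj : Set.InjOn Prod.fst (S : Set (Fin (k+1) × Fin m)) := by
    intro a ha b hb h
    by_contra hne
    exact hS a ha b hb hne h
  have himg : S.image Prod.fst = Finset.univ := by
    apply Finset.eq_univ_of_card
    rw [Finset.card_image_of_injOn hinj, hc]; simp
  have hex : ∀ i : Fin (k+1), ∃ v ∈ S, v.1 = i := by
    intro i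
    have : i ∈ S.image Prod.fst := himg ▸ mem_univ i
    obtain ⟨v, hv, hv1⟩ := Finset.mem_image.1 this
    exact ⟨v, hv, hv1⟩
  choose v hv hv1 using hex
  refine ⟨fun i => (v i).2, ?_⟩
  have hsub : gr (fun i => (v i).2) ⊆ S := by
    intro w hw
    rw [mem_gr] at hw
    have : w = v w.1 := Prod.ext (hv1 w.1).symm hw
    rw [this]; exact hv w.1
  exact (Finset.eq_of_subset_of_card_le hsub (by rw [card_gr, hc])).symm

lemma insert_erase_gr (f : Fin (k+1) → Fin m) (i : Fin (k+1)) (j : Fin m) :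
    insert (i, j) ((gr f).erase (i, f i)) = gr (Function.update f i j) := by
  ext v
  simp only [Finset.mem_insert, Finset.mem_erase, mem_gr]
  constructor
  · rintro (rfl | ⟨hne, hv⟩)
    · simp
    · rw [Function.update_of_ne (fun h : v.1 = i => hne (Prod.ext h (by rw [hv, h])))]
      exact hv
  · intro hv
    by_cases h : v.1 = i
    · left; exact Prod.ext h (by rw [hv, h, Function.update_self])
    · right
      rw [Function.update_of_ne h] at hv
      exact ⟨fun he => h (by rw [he]), hv⟩

lemma sum_insert_erase {c : Finset (Fin (k+1) × Fin m) → ZMod 2}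
    (hc : ∀ S, c S ≠ 0 → S ∈ multipartiteComplex k m)
    (f : Fin (k+1) → Fin m) (i : Fin (k+1)) :
    ∑ v ∈ Finset.univ \ ((gr f).erase (i, f i)), c (insert v ((gr f).erase (i, f i)))
      = ∑ j : Fin m, c (gr (Function.update f i j)) := by
  set T := (gr f).erase (i, f i) with hT
  have h1 : ∀ v ∈ Finset.univ \ T,
      c (insert v T) = if v.1 = i then c (gr (Function.update f i v.2)) else 0 := by
    intro v hv
    rw [Finset.mem_sdiff] at hv
    by_cases hvi : v.1 = i
    · rw [if_pos hvi]
      congr 1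
      have hv' : v = (i, v.2) := Prod.ext hvi rfl
      rw [hv', ← insert_erase_gr]
    · rw [if_neg hvi]
      by_contra h
      have hmem := hc _ h
      simp only [multipartiteComplex, mem_filter, mem_univ, true_and] at hmem
      have h2 : (v.1, f v.1) ∈ T := by
        rw [hT, Finset.mem_erase]
        exact ⟨fun he => hvi (congrArg Prod.fst he), mem_gr.2 rfl⟩
      have h3 : v ≠ (v.1, f v.1) := by
        intro he; exact hv.2 (he ▸ h2)
      exact h3 (Prod.ext rfl (by
        have := hmem v (Finset.mem_insert_self _ _) (v.1, f v.1)
          (Finset.mem_insert_of_mem h2)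
        by_contra hne
        exact this (fun he => h3 he) rfl))
  rw [Finset.sum_congr rfl h1]
  rw [Finset.sum_subset (Finset.sdiff_subset (s := Finset.univ) (t := T))
    (fun v _ hv => by
      rw [if_neg]
      intro hvi
      simp only [Finset.mem_sdiff, mem_univ, true_and, not_not] at hv
      rw [hT, Finset.mem_erase, mem_gr] at hv
      exact hv.1 (Prod.ext hvi (by rw [hv.2, hvi])))]
  rw [Fintype.sum_prod_type]
  simp

end Aux

section Main
variable {k m : ℕ} [NeZero m]

lemma cycle_lemma {c : Finset (Fin (k+1) × Fin m) → ZMod 2}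
    (hc : ∀ S, c S ≠ 0 → S ∈ multipartiteComplex k m)
    (hker : ∀ T, ∑ v ∈ Finset.univ \ T, c (insert v T) = 0)
    (f : Fin (k+1) → Fin m) (i : Fin (k+1)) :
    ∑ j : Fin m, c (gr (Function.update f i j)) = 0 := by
  rw [← sum_insert_erase hc f i]
  exact hker _

lemma inj_lemma {c : Finset (Fin (k+1) × Fin m) → ZMod 2}
    (hc : ∀ S, c S ≠ 0 → S ∈ multipartiteComplex k m ∧ S.card = k + 1)
    (hker : ∀ T, ∑ v ∈ Finset.univ \ T, c (insert v T) = 0)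
    (h0 : ∀ g : Fin (k+1) → {j : Fin m // j ≠ 0}, c (gr fun i => (g i).1) = 0) :
    c = 0 := by
  have key : ∀ n (f : Fin (k+1) → Fin m),
      (Finset.univ.filter fun i => f i = 0).card ≤ n → c (gr f) = 0 := by
    intro n
    induction n with
    | zero =>
      intro f hf
      have hz : ∀ i, f i ≠ 0 := by
        intro i hi
        have : i ∈ Finset.univ.filter fun i => f i = 0 := by simp [hi]
        have := Finset.card_pos.2 ⟨i, this⟩
        omega
      have := h0 (fun i => ⟨f i, hz i⟩)
      simpa using this
    | succ n ih =>
      intro f hf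
      by_cases hz : ∃ i, f i = 0
      · obtain ⟨i, hi⟩ := hz
        have hcyc := cycle_lemma (fun S hS => (hc S hS).1) hker f i
        rw [← Finset.add_sum_erase _ _ (Finset.mem_univ (0 : Fin m))] at hcyc
        have hupd0 : Function.update f i 0 = f := by
          rw [← hi]; exact Function.update_eq_self i f
        rw [hupd0] at hcyc
        have heach : ∀ j ∈ Finset.univ.erase (0 : Fin m),
            c (gr (Function.update f i j)) = 0 := by
          intro j hj
          rw [Finset.mem_erase] at hj
          apply ih
          have hfilt : (Finset.univ.filter fun i' => Function.update f i j i' = 0)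
              = (Finset.univ.filter fun i' => f i' = 0).erase i := by
            ext i'
            by_cases h : i' = i
            · subst h
              simp [Function.update_self, hj.1]
            · simp [Function.update_of_ne h, h]
          rw [hfilt, Finset.card_erase_of_mem (by simp [hi])]
          omega
        rw [Finset.sum_eq_zero heach, add_zero] at hcyc
        exact hcyc
      · push_neg at hz
        have := h0 (fun i => ⟨f i, hz i⟩)
        simpa using this
  funext S
  by_contra hS
  obtain ⟨hSm, hSc⟩ := hc S (by simpa using hS)
  obtain ⟨f, rfl⟩ := exists_gr hSm hSc
  exact hS (by simpa using key _ f le_rfl)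

end Main

section Surj
variable {k m : ℕ} [NeZero m]

noncomputable def wgt (y : (Fin (k+1) → {j : Fin m // j ≠ 0}) → ZMod 2)
    (f : Fin (k+1) → Fin m) : ZMod 2 :=
  ∑ g : Fin (k+1) → {j : Fin m // j ≠ 0},
    if (∀ i, f i ≠ 0 → (g i : Fin m) = f i) then y g else 0

noncomputable def cOf (y : (Fin (k+1) → {j : Fin m // j ≠ 0}) → ZMod 2)
    (S : Finset (Fin (k+1) × Fin m)) : ZMod 2 :=
  ∑ f : Fin (k+1) → Fin m, if S = gr f then wgt y f else 0

lemma cOf_gr (y : (Fin (k+1) → {j : Fin m // j ≠ 0}) → ZMod 2)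
    (f : Fin (k+1) → Fin m) : cOf y (gr f) = wgt y f := by
  rw [cOf, Finset.sum_eq_single f]
  · rw [if_pos rfl]
  · intro b _ hb
    rw [if_neg (fun h => hb (gr_inj h.symm))]
  · intro h; exact absurd (Finset.mem_univ f) h

lemma cOf_supp (y : (Fin (k+1) → {j : Fin m // j ≠ 0}) → ZMod 2)
    (S : Finset (Fin (k+1) × Fin m)) (hS : cOf y S ≠ 0) :
    S ∈ multipartiteComplex k m ∧ S.card = k + 1 := by
  rw [cOf] at hS
  obtain ⟨f, _, hf⟩ := Finset.exists_ne_zero_of_sum_ne_zero hS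
  have : S = gr f := by
    by_contra h; rw [if_neg h] at hf; exact hf rfl
  rw [this]
  exact ⟨gr_mem f, card_gr f⟩

lemma cOf_restrict (y : (Fin (k+1) → {j : Fin m // j ≠ 0}) → ZMod 2)
    (g : Fin (k+1) → {j : Fin m // j ≠ 0}) :
    cOf y (gr fun i => (g i : Fin m)) = y g := by
  rw [cOf_gr, wgt, Finset.sum_eq_single g]
  · rw [if_pos (fun i _ => rfl)]
  · intro g' _ hg'
    rw [if_neg]
    intro h
    exact hg' (funext fun i => Subtype.ext (h i (g i).2))
  · intro h; exact absurd (Finset.mem_univ g) h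

lemma cOf_cycle (y : (Fin (k+1) → {j : Fin m // j ≠ 0}) → ZMod 2)
    (f : Fin (k+1) → Fin m) (i : Fin (k+1)) :
    ∑ j : Fin m, wgt y (Function.update f i j) = 0 := by
  simp only [wgt]
  rw [Finset.sum_comm]
  apply Finset.sum_eq_zero
  intro g _
  have hcond : ∀ j : Fin m,
      (∀ i', Function.update f i j i' ≠ 0 → (g i' : Fin m) = Function.update f i j i')
      ↔ ((j ≠ 0 → (g i : Fin m) = j) ∧
          ∀ i', i' ≠ i → f i' ≠ 0 → (g i' : Fin m) = f i') := by
    intro j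
    constructor
    · intro h
      refine ⟨fun hj => by simpa [Function.update_self] using h i (by simpa using hj),
        fun i' hi' => by simpa [Function.update_of_ne hi'] using h i'⟩
    · rintro ⟨h1, h2⟩ i'
      by_cases h : i' = i
      · subst h; simpa [Function.update_self] using h1
      · simpa [Function.update_of_ne h] using h2 i' h
  rw [Finset.sum_congr rfl (fun j _ => if_congr (hcond j) rfl rfl)]
  simp only [ite_and]
  rw [← Finset.sum_filter]
  have hset : (Finset.univ.filter fun j : Fin m => j ≠ 0 → (g i : Fin m) = j)
      = {0, (g i : Fin m)} := by
    ext j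
    simp only [Finset.mem_filter, Finset.mem_univ, true_and, Finset.mem_insert,
      Finset.mem_singleton]
    constructor
    · intro h
      by_cases hj : j = 0
      · left; exact hj
      · right; exact (h hj).symm
    · rintro (rfl | rfl)
      · intro h; exact absurd rfl h
      · intro _; rfl
  rw [hset, Finset.sum_pair (Ne.symm (g i).2)]
  exact CharTwo.add_self_eq_zero _

end Surj

section Ker
variable {k m : ℕ} [NeZero m]

lemma cOf_ker (y : (Fin (k+1) → {j : Fin m // j ≠ 0}) → ZMod 2)
    (T : Finset (Fin (k+1) × Fin m)) :
    ∑ v ∈ Finset.univ \ T, cOf y (insert v T) = 0 := by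
  by_cases hcard : T.card = k
  · by_cases hT : T ∈ multipartiteComplex k m
    · -- T is a (k-1)-face
      have himg : ∃ i : Fin (k+1), i ∉ T.image Prod.fst := by
        by_contra h
        push_neg at h
        have h1 : (Finset.univ : Finset (Fin (k+1))) ⊆ T.image Prod.fst :=
          fun i _ => h i
        have h2 := Finset.card_le_card h1
        have h3 := Finset.card_image_le (s := T) (f := Prod.fst)
        simp only [Finset.card_univ, Fintype.card_fin] at h2
        omega
      obtain ⟨i, hi⟩ := himg
      have hnotmem : (i, (0 : Fin m)) ∉ T := fun h =>
        hi (Finset.mem_image.2 ⟨_, h, rfl⟩)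
      have hSmem : insert (i, (0 : Fin m)) T ∈ multipartiteComplex k m := by
        simp only [multipartiteComplex, mem_filter, mem_univ, true_and] at hT ⊢
        intro a ha b hb hne
        rw [Finset.mem_insert] at ha hb
        rcases ha with rfl | ha
        · rcases hb with rfl | hb
          · exact absurd rfl hne
          · exact fun h => hi (Finset.mem_image.2 ⟨b, hb, h.symm⟩)
        · rcases hb with rfl | hb
          · exact fun h => hi (Finset.mem_image.2 ⟨a, ha, h⟩)
          · exact hT a ha b hb hne
      have hScard : (insert (i, (0 : Fin m)) T).card = k + 1 := by
        rw [Finset.card_insert_of_notMem hnotmem, hcard]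
      obtain ⟨f, hf⟩ := exists_gr hSmem hScard
      have hfi : f i = 0 :=
        (mem_gr.1 (hf ▸ Finset.mem_insert_self (i, (0 : Fin m)) T)).symm
      have hTeq : T = (gr f).erase (i, f i) := by
        rw [hfi, ← hf, Finset.erase_insert hnotmem]
      rw [hTeq, sum_insert_erase (fun S hS => (cOf_supp y S hS).1) f i]
      rw [Finset.sum_congr rfl (fun j _ => cOf_gr y (Function.update f i j))]
      exact cOf_cycle y f i
    · apply Finset.sum_eq_zero
      intro v hv
      by_contra h
      exact hT (mpc_subset (cOf_supp y _ h).1 (Finset.subset_insert v T))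
  · apply Finset.sum_eq_zero
    intro v hv
    rw [Finset.mem_sdiff] at hv
    by_contra h
    have h2 := (cOf_supp y _ h).2
    rw [Finset.card_insert_of_notMem hv.2] at h2
    omega

end Ker


/-- the complete `(k+1)`-partite graph with parts of size `m` has
exactly `m^(k+1)` cliques of size `k+1`, and the `k`-th Betti number of its
clique complex over ℤ/2 is `(m−1)^(k+1)`. -/
theorem stmt_9 (k m : ℕ) (hm : 1 ≤ m) :
    dfaces (multipartiteComplex k m) k = m ^ (k + 1) ∧
    bettiRed (multipartiteComplex k m) k = (m - 1) ^ (k + 1) := by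
  haveI : NeZero m := ⟨by omega⟩
  constructor
  · have heq : (multipartiteComplex k m).filter (fun S => S.card = k + 1)
        = Finset.univ.image (gr (k := k) (m := m)) := by
      ext S
      simp only [Finset.mem_filter, Finset.mem_image, Finset.mem_univ, true_and]
      constructor
      · rintro ⟨h1, h2⟩
        obtain ⟨f, rfl⟩ := exists_gr h1 h2
        exact ⟨f, rfl⟩
      · rintro ⟨f, rfl⟩
        exact ⟨gr_mem f, card_gr f⟩
    rw [dfaces, heq, Finset.card_image_of_injective _ gr_inj, Finset.card_univ]
    simp [Fintype.card_fun]
  · rw [bettiRed]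
    have h2 : chainSpace (multipartiteComplex k m) (k+1)
        = (⊥ : Submodule (ZMod 2) (Finset (Fin (k+1) × Fin m) → ZMod 2)) := by
      rw [eq_bot_iff]
      intro c hc
      simp only [Submodule.mem_bot]
      funext S
      by_contra h
      have hmem : S ∈ multipartiteComplex k m ∧ S.card = (k+1) + 1 := hc S h
      have hle := card_le_of_mem hmem.1
      omega
    rw [h2, Submodule.map_bot, finrank_bot, Nat.sub_zero]
    let L : (chainSpace (multipartiteComplex k m) k
          ⊓ LinearMap.ker (bdryAug (Fin (k+1) × Fin m)) :
          Submodule (ZMod 2) (Finset (Fin (k+1) × Fin m) → ZMod 2))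
        →ₗ[ZMod 2] ((Fin (k+1) → {j : Fin m // j ≠ 0}) → ZMod 2) :=
      { toFun := fun c g => (c : Finset (Fin (k+1) × Fin m) → ZMod 2) (gr fun i => (g i : Fin m))
        map_add' := fun a b => by funext g; simp
        map_smul' := fun r a => by funext g; simp }
    have hLinj : Function.Injective L := by
      intro a b hab
      have hd0 : L (a - b) = 0 := by rw [map_sub, hab, sub_self]
      have hd : ((a - b : _) : Finset (Fin (k+1) × Fin m) → ZMod 2) = 0 := by
        apply inj_lemma
        · exact fun S hS => (Submodule.mem_inf.1 (a - b).2).1 S hS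
        · exact fun T => congrFun (LinearMap.mem_ker.1 (Submodule.mem_inf.1 (a - b).2).2) T
        · exact fun g => congrFun hd0 g
      have : a - b = 0 := Subtype.ext (by simpa using hd)
      exact sub_eq_zero.1 this
    have hLsurj : Function.Surjective L := by
      intro y
      refine ⟨⟨cOf y, Submodule.mem_inf.2 ⟨?_, ?_⟩⟩, ?_⟩
      · exact fun S hS => cOf_supp y S hS
      · exact LinearMap.mem_ker.2 (funext fun T => cOf_ker y T)
      · funext g
        exact cOf_restrict y g
    have e := LinearEquiv.ofBijective L ⟨hLinj, hLsurj⟩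
    rw [LinearEquiv.finrank_eq e, Module.finrank_fintype_fun_eq_card, Fintype.card_fun,
      Fintype.card_fin]
    congr 1
    rw [Fintype.card_subtype_compl, Fintype.card_subtype_eq, Fintype.card_fin]
end

section
/- If a graph G on n vertices contains a set of t triangles whose boundary vectors are linearly independent over ℤ/2, and this set is maximal (no triangle of G can be added while preserving ℤ/2-independence of triangle boundary vectors), then removing all edges belonging to these t triangles (at most 3t edges) makes G triangle-free. -/
open Finset

variable {V : Type*} [Fintype V] [DecidableEq V]

/-- The ℤ/2 boundary vector of a triangle `T`: the indicator of its 2-element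
subsets (its edges). -/
def triVec (T : Finset V) : Finset V → ZMod 2 :=
  fun E => if E ⊆ T ∧ E.card = 2 then 1 else 0

/-- if `𝒯` is a maximal set of triangles of `G` with linearly
independent boundary vectors over ℤ/2, then deleting every edge contained in
some triangle of `𝒯` makes `G` triangle-free. -/
theorem stmt_10 (G : SimpleGraph V) (𝒯 : Finset (Finset V))
    (h𝒯 : ∀ T ∈ 𝒯, G.IsNClique 3 T)
    (hind : LinearIndependent (ZMod 2)
      (fun T : {x // x ∈ 𝒯} => triVec (T : Finset V)))
    (hmax : ∀ T', G.IsNClique 3 T' →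
      LinearIndependent (ZMod 2)
        (fun T : {x // x ∈ insert T' 𝒯} => triVec (T : Finset V)) →
      T' ∈ 𝒯) :
    (G.deleteEdges {e | ∃ T ∈ 𝒯, ∀ v ∈ e, v ∈ T}).CliqueFree 3 := by
  intro t ht
  obtain ⟨htc, htcard⟩ := ht
  have htG : G.IsNClique 3 t := ⟨htc.mono (SimpleGraph.deleteEdges_le _), htcard⟩
  obtain ⟨a, ha, b, hb, hab⟩ := Finset.one_lt_card.mp (by rw [htcard]; norm_num)
  have hadj := htc ha hb hab
  rw [SimpleGraph.deleteEdges_adj] at hadj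
  have hnotdel : ¬ ∃ T ∈ 𝒯, ∀ v ∈ s(a, b), v ∈ T := by
    simpa using hadj.2
  by_cases htmem : t ∈ 𝒯
  · exact hnotdel ⟨t, htmem, fun v hv => by
      rcases Sym2.mem_iff.mp hv with rfl | rfl
      exacts [ha, hb]⟩
  · apply htmem
    apply hmax t htG
    rw [Fintype.linearIndependent_iff]
    intro g hg
    set c : Finset V → ZMod 2 := fun x => if h : x ∈ insert t 𝒯 then g ⟨x, h⟩ else 0 with hc
    have hsum : ∑ x ∈ insert t 𝒯, c x • triVec x = 0 := by
      rw [← Finset.sum_coe_sort (insert t 𝒯) (fun x => c x • triVec x), ← hg]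
      exact Finset.sum_congr rfl (fun i _ => by rw [show c ↑i = g i from dif_pos i.2])
    rw [Finset.sum_insert htmem] at hsum
    have hct : c t = 0 := by
      have h1 := congrFun hsum ({a, b} : Finset V)
      simp only [Pi.add_apply, Pi.smul_apply, Finset.sum_apply, Pi.zero_apply,
        smul_eq_mul] at h1
      have h2 : triVec t {a, b} = 1 := by
        simp [triVec, Finset.insert_subset_iff, ha, hb, Finset.card_pair hab]
      have h3 : ∀ x ∈ 𝒯, c x * triVec x {a, b} = 0 := by
        intro T hT
        have hns : ¬ (({a, b} : Finset V) ⊆ T) := fun hsub => hnotdel ⟨T, hT, fun v hv => by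
          rcases Sym2.mem_iff.mp hv with rfl | rfl
          · exact hsub (Finset.mem_insert_self _ _)
          · exact hsub (Finset.mem_insert_of_mem (Finset.mem_singleton_self _))⟩
        simp [triVec, hns]
      rw [h2, Finset.sum_eq_zero h3, add_zero, mul_one] at h1
      exact h1
    have hrest : ∑ x ∈ 𝒯, c x • triVec x = 0 := by
      rwa [hct, zero_smul, zero_add] at hsum
    have hzero : ∀ x ∈ 𝒯, c x = 0 := by
      have h4 := Fintype.linearIndependent_iff.mp hind (fun i => c ↑i)
        ((Finset.sum_coe_sort 𝒯 (fun x => c x • triVec x)).trans hrest)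
      intro x hx
      exact h4 ⟨x, hx⟩
    intro i
    have hgi : g i = c ↑i := (show c ↑i = g i from dif_pos i.2).symm
    rw [hgi]
    rcases Finset.mem_insert.mp i.2 with h | h
    · rw [h]; exact hct
    · exact hzero _ h
end

section
/- In any simplicial complex on n vertices, the number of (k+1)-faces satisfies d_{k+1} ≤ r_{k+1} · n / (k+2), where r_{k+1} is the ℤ/2-rank of the (k+1)-st boundary map. Consequently, if the clique complex of a graph G satisfies β_k ≥ (1−δ)d_k, then the number of (k+2)-cliques of G is at most δ·d_k·n/(k+2). -/
open Finset

variable {V : Type*} [Fintype V] [DecidableEq V]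

open scoped Classical in
/-- The clique complex of a graph `G`: all vertex subsets inducing a clique. -/
noncomputable def cliqueComplex (G : SimpleGraph V) : Finset (Finset V) :=
  Finset.univ.filter fun S => ∀ a ∈ S, ∀ b ∈ S, a ≠ b → G.Adj a b


section Aux

variable {V : Type*} [Fintype V] [DecidableEq V]

lemma bdry_apply (c : Finset V → ZMod 2) (T : Finset V) :
    bdry V c T = if T = ∅ then 0 else ∑ v ∈ Finset.univ \ T, c (insert v T) := rfl

lemma bdry_bdry (c : Finset V → ZMod 2) : bdry V (bdry V c) = 0 := by
  funext T
  rw [bdry_apply]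
  by_cases hT : T = ∅
  · simp [hT]
  rw [if_neg hT]
  have hstep : ∀ v ∈ univ \ T, bdry V c (insert v T)
      = ∑ w ∈ univ \ insert v T, c (insert w (insert v T)) := by
    intro v _
    rw [bdry_apply, if_neg (by simp)]
  rw [Finset.sum_congr rfl hstep, Finset.sum_sigma']
  simp only [Pi.zero_apply]
  refine Finset.sum_involution (fun p _ => ⟨p.2, p.1⟩) ?_ ?_ ?_ ?_
  · intro p _
    have : insert p.2 (insert p.1 T) = insert p.1 (insert p.2 T) := Finset.insert_comm _ _ _
    simp only [this]
    exact CharTwo.add_self_eq_zero _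
  · intro p hp _
    rw [Finset.mem_sigma] at hp
    have h2 := hp.2
    simp only [Finset.mem_sdiff, Finset.mem_insert] at h2
    intro h
    apply h2.2
    left
    exact congrArg Sigma.fst h
  · intro p hp
    rw [Finset.mem_sigma] at hp ⊢
    have h1 := hp.1
    have h2 := hp.2
    simp only [Finset.mem_sdiff, Finset.mem_univ, true_and, Finset.mem_insert, not_or] at h1 h2 ⊢
    exact ⟨h2.2, fun h => (h2.1 h.symm).elim, h1⟩
  · intro p _
    rfl

lemma bdry_indicator_erase {S S' : Finset V} {v : V} (hv : v ∈ S) (hv' : v ∈ S')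
    (hne : S'.erase v ≠ ∅) :
    bdry V (fun U => if U = S then 1 else 0) (S'.erase v)
      = if S' = S then (1 : ZMod 2) else 0 := by
  rw [bdry_apply, if_neg hne]
  have key : ∀ w ∈ univ \ S'.erase v,
      (if insert w (S'.erase v) = S then (1 : ZMod 2) else 0)
        = if S' = S ∧ w = v then 1 else 0 := by
    intro w _
    by_cases h : insert w (S'.erase v) = S
    · rw [if_pos h]
      have hwv : w = v := by
        have : v ∈ insert w (S'.erase v) := h ▸ hv
        rcases Finset.mem_insert.mp this with h' | h'
        · exact h'.symm
        · exact absurd h' (Finset.notMem_erase v S')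
      subst hwv
      rw [Finset.insert_erase hv'] at h
      rw [if_pos ⟨h, rfl⟩]
    · rw [if_neg h, if_neg]
      rintro ⟨rfl, rfl⟩
      exact h (Finset.insert_erase hv')
  rw [Finset.sum_congr rfl key]
  by_cases hSS : S' = S
  · subst hSS
    simp only [true_and, if_pos rfl]
    rw [Finset.sum_ite_eq' (univ \ S'.erase v) v (fun _ => (1 : ZMod 2)),
      if_pos (by simp)]
    simp
  · simp [hSS]

/-- per-vertex rank bound -/
lemma card_le_rk (Δ : Finset (Finset V)) (k : ℕ) (v : V) :
    (Δ.filter fun S => S.card = k + 2 ∧ v ∈ S).card ≤ rk Δ (k + 1) := by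
  classical
  set Fv := Δ.filter fun S => S.card = k + 2 ∧ v ∈ S with hFv
  set P := (chainSpace Δ (k + 1)).map (bdry V) with hP
  let Ψ : (Finset V → ZMod 2) →ₗ[ZMod 2] (↥Fv → ZMod 2) :=
    LinearMap.funLeft (ZMod 2) (ZMod 2) (fun S : ↥Fv => (S : Finset V).erase v)
  have hmem : ∀ S : Finset V, S ∈ Fv → (S ∈ Δ ∧ S.card = k + 2 ∧ v ∈ S) := by
    intro S hS
    have := Finset.mem_filter.mp hS
    exact ⟨this.1, this.2⟩
  have htop : (⊤ : Submodule (ZMod 2) (↥Fv → ZMod 2)) ≤ P.map Ψ := by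
    rw [← (Pi.basisFun (ZMod 2) ↥Fv).span_eq]
    rw [Submodule.span_le]
    rintro x ⟨i, rfl⟩
    rw [Pi.basisFun_apply]
    refine ⟨bdry V (fun U => if U = (i : Finset V) then 1 else 0), ?_, ?_⟩
    · refine ⟨_, ?_, rfl⟩
      intro U hU
      have : U = (i : Finset V) := by
        by_contra h
        exact hU (if_neg h)
      subst this
      obtain ⟨h1, h2, _⟩ := hmem _ i.2
      exact ⟨h1, h2⟩
    · funext j
      obtain ⟨_, hci, hvi⟩ := hmem _ i.2
      obtain ⟨_, hcj, hvj⟩ := hmem _ j.2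
      have hnej : (j : Finset V).erase v ≠ ∅ := by
        intro h
        have := Finset.card_erase_of_mem hvj
        rw [h] at this
        simp [hcj] at this
      have happ : Ψ (bdry V fun U => if U = (i : Finset V) then 1 else 0) j
          = bdry V (fun U => if U = (i : Finset V) then 1 else 0)
              ((j : Finset V).erase v) := rfl
      rw [happ, bdry_indicator_erase hvi hvj hnej]
      by_cases h : j = i
      · subst h; simp
      · rw [if_neg (fun hh => h (Subtype.ext hh)), Pi.single_eq_of_ne h]
  have heq : P.map Ψ = ⊤ := le_antisymm le_top htop
  calc Fv.card = Fintype.card ↥Fv := (Fintype.card_coe _).symm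
    _ = Module.finrank (ZMod 2) (↥Fv → ZMod 2) :=
        (Module.finrank_fintype_fun_eq_card _).symm
    _ = Module.finrank (ZMod 2) (P.map Ψ) := by rw [heq, finrank_top]
    _ ≤ Module.finrank (ZMod 2) P := Submodule.finrank_map_le Ψ P
    _ = rk Δ (k + 1) := rfl

lemma counting (Δ : Finset (Finset V)) (k : ℕ) :
    (k + 2) * dfaces Δ (k + 1)
      = ∑ v : V, (Δ.filter fun S => S.card = k + 2 ∧ v ∈ S).card := by
  classical
  have h1 : ∀ v : V, (Δ.filter fun S => S.card = k + 2 ∧ v ∈ S).card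
      = ∑ S ∈ Δ.filter fun S => S.card = k + 2, if v ∈ S then 1 else 0 := by
    intro v
    rw [← Finset.filter_filter, Finset.card_filter]
  simp only [h1]
  rw [Finset.sum_comm]
  have h2 : ∀ S ∈ Δ.filter fun S => S.card = k + 2,
      (∑ v : V, if v ∈ S then 1 else 0) = k + 2 := by
    intro S hS
    have hc := (Finset.mem_filter.mp hS).2
    rw [Finset.sum_ite_mem, Finset.univ_inter, Finset.sum_const, smul_eq_mul, mul_one, hc]
  rw [Finset.sum_congr rfl h2, Finset.sum_const, smul_eq_mul]
  have : dfaces Δ (k + 1) = (Δ.filter fun S => S.card = k + 2).card := by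
    unfold dfaces
    congr 1
  rw [this, mul_comm]

lemma part1 (n : ℕ) (hn : Fintype.card V = n) (Δ : Finset (Finset V)) (k : ℕ) :
    (k + 2) * dfaces Δ (k + 1) ≤ rk Δ (k + 1) * n := by
  rw [counting Δ k]
  calc ∑ v : V, (Δ.filter fun S => S.card = k + 2 ∧ v ∈ S).card
      ≤ ∑ _v : V, rk Δ (k + 1) := Finset.sum_le_sum fun v _ => card_le_rk Δ k v
    _ = Fintype.card V * rk Δ (k + 1) := by rw [Finset.sum_const, smul_eq_mul, Finset.card_univ]
    _ = rk Δ (k + 1) * n := by rw [hn, mul_comm]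

lemma chainSpace_finrank_le (Δ : Finset (Finset V)) (k : ℕ) :
    Module.finrank (ZMod 2) (chainSpace Δ k) ≤ dfaces Δ k := by
  classical
  set F := Δ.filter fun S => S.card = k + 1 with hF
  let φ : ↥(chainSpace Δ k) →ₗ[ZMod 2] (↥F → ZMod 2) :=
    (LinearMap.funLeft (ZMod 2) (ZMod 2) ((↑) : ↥F → Finset V)).comp
      (chainSpace Δ k).subtype
  have hinj : Function.Injective φ := by
    intro a b hab
    apply Subtype.ext
    funext S
    by_cases hS : S ∈ F
    · exact congrFun hab ⟨S, hS⟩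
    · have ha : (a : Finset V → ZMod 2) S = 0 := by
        by_contra h
        exact hS (Finset.mem_filter.mpr ⟨(a.2 S h).1, (a.2 S h).2⟩)
      have hb : (b : Finset V → ZMod 2) S = 0 := by
        by_contra h
        exact hS (Finset.mem_filter.mpr ⟨(b.2 S h).1, (b.2 S h).2⟩)
      rw [ha, hb]
  calc Module.finrank (ZMod 2) (chainSpace Δ k)
      ≤ Module.finrank (ZMod 2) (↥F → ZMod 2) :=
        LinearMap.finrank_le_finrank_of_injective hinj
    _ = Fintype.card ↥F := Module.finrank_fintype_fun_eq_card _
    _ = F.card := Fintype.card_coe _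
    _ = dfaces Δ k := rfl

end Aux

/-- in any simplicial complex on `n` vertices,
`(k+2) · d_{k+1} ≤ r_{k+1} · n`; consequently, if the clique complex of `G`
satisfies `β_k ≥ (1−δ)·d_k`, then the number of `(k+2)`-cliques of `G`
(its `(k+1)`-faces) is at most `δ·d_k·n/(k+2)`. -/
theorem stmt_11 (n : ℕ) (hn : Fintype.card V = n)
    (Δ : Finset (Finset V)) (hΔ : IsComplex Δ) (k : ℕ)
    (G : SimpleGraph V) (δ : ℝ) (hδ : 0 ≤ δ)
    (hb : (1 - δ) * (dfaces (cliqueComplex G) k : ℝ)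
        ≤ (betti (cliqueComplex G) k : ℝ)) :
    (k + 2) * dfaces Δ (k + 1) ≤ rk Δ (k + 1) * n ∧
    ((k : ℝ) + 2) * (dfaces (cliqueComplex G) (k + 1) : ℝ)
      ≤ δ * (dfaces (cliqueComplex G) k : ℝ) * n := by
  classical
  have hCC : IsComplex (cliqueComplex G) := by
    intro S hS T hTS
    simp only [cliqueComplex, Finset.mem_filter, Finset.mem_univ, true_and] at hS ⊢
    intro a ha b hb hab
    exact hS a (hTS ha) b (hTS hb) hab
  set Δc := cliqueComplex G with hΔc
  set Z := (chainSpace Δc k ⊓ LinearMap.ker (bdry V) :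
      Submodule (ZMod 2) (Finset V → ZMod 2)) with hZ
  have him : (chainSpace Δc (k + 1)).map (bdry V) ≤ Z := by
    rintro x ⟨c, hc, rfl⟩
    refine ⟨?_, ?_⟩
    · intro T hT
      rw [bdry_apply] at hT
      by_cases hTe : T = ∅
      · rw [if_pos hTe] at hT; exact absurd rfl hT
      rw [if_neg hTe] at hT
      have : ∃ w ∈ univ \ T, c (insert w T) ≠ 0 := by
        by_contra h
        push_neg at h
        exact hT (Finset.sum_eq_zero h)
      obtain ⟨w, hw, hcw⟩ := this
      obtain ⟨hmem, hcard⟩ := hc _ hcw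
      have hwT : w ∉ T := (Finset.mem_sdiff.mp hw).2
      constructor
      · exact hCC _ hmem T (Finset.subset_insert w T)
      · have := Finset.card_insert_of_notMem hwT
        omega
    · show bdry V (bdry V c) = 0
      exact bdry_bdry c
  have hr_le_Z : rk Δc (k + 1) ≤ Module.finrank (ZMod 2) Z :=
    Submodule.finrank_mono him
  have hZ_le : Module.finrank (ZMod 2) Z ≤ dfaces Δc k :=
    le_trans (Submodule.finrank_mono inf_le_left) (chainSpace_finrank_le Δc k)
  have hbetti : (betti Δc k : ℝ)
      = (Module.finrank (ZMod 2) Z : ℝ) - (rk Δc (k + 1) : ℝ) := by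
    unfold betti
    rw [Nat.cast_sub hr_le_Z]
  have hrreal : (rk Δc (k + 1) : ℝ) ≤ δ * (dfaces Δc k : ℝ) := by
    have h1 : (Module.finrank (ZMod 2) Z : ℝ) ≤ (dfaces Δc k : ℝ) := by
      exact_mod_cast hZ_le
    rw [hbetti] at hb
    linarith
  refine ⟨part1 n hn Δ k, ?_⟩
  have hmain := part1 n hn Δc k
  have hmain' : ((k : ℝ) + 2) * (dfaces Δc (k + 1) : ℝ)
      ≤ (rk Δc (k + 1) : ℝ) * (n : ℝ) := by
    exact_mod_cast hmain
  calc ((k : ℝ) + 2) * (dfaces Δc (k + 1) : ℝ)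
      ≤ (rk Δc (k + 1) : ℝ) * (n : ℝ) := hmain'
    _ ≤ δ * (dfaces Δc k : ℝ) * (n : ℝ) :=
        mul_le_mul_of_nonneg_right hrreal (Nat.cast_nonneg n)
end
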